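/- arXiv:1504.00063 — 2 statements merged into one kernel-verified Lean document; each statement's English description precedes it below -/
import Mathlib

section
/- Let T > 0 and γ ∈ (0,1). If f, g : [0,T] → ℝ are continuously differentiable, then the following fractional integration by parts formula holds: ∫_0^T [(1/Γ(1−γ)) ∫_0^t (t−r)^{−γ} f'(r) dr] g(t) dt + f(0) · (1/Γ(1−γ)) ∫_0^T ξ^{−γ} g(ξ) dξ = ∫_0^T f(t) [−(1/Γ(1−γ)) ∫_t^T (ξ−t)^{−γ} g'(ξ) dξ] dt + g(T) · (1/Γ(1−γ)) ∫_0^T (T−ξ)^{−γ} f(ξ) dξ. -/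
/-!
After dividing by `Γ(1 - γ)` this is an identity for the kernel `k u = u ^ (-γ)` that holds for
every `k` integrable on `[0, T]`. Both double integrals are integrals over the triangle
`0 ≤ x ≤ y ≤ T`, of `k (y - x) f' x g y` and of `k (y - x) f x g' y`. The shear
`(x, y) ↦ (y - x, y)` preserves Lebesgue measure, maps the triangle onto itself and turns the
kernel into `k x`, so the sum becomes
`∫₀ᵀ k x ∫ₓᵀ ∂_y (f (y - x) g y) dy dx = ∫₀ᵀ k x (f (T - x) g T - f 0 g x) dx`,
which is the difference of the two boundary terms.
-/

open MeasureTheory Real Set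

def triangle (a b : ℝ) : Set (ℝ × ℝ) := {p | a ≤ p.1 ∧ p.1 ≤ p.2 ∧ p.2 ≤ b}

theorem measurableSet_triangle (a b : ℝ) : MeasurableSet (triangle a b) :=
  (measurableSet_le measurable_const measurable_fst).inter
    ((measurableSet_le measurable_fst measurable_snd).inter
      (measurableSet_le measurable_snd measurable_const))

theorem triangle_subset_Icc_prod (a b : ℝ) : triangle a b ⊆ Icc a b ×ˢ Icc a b :=
  fun _ ⟨h₁, h₂, h₃⟩ => ⟨⟨h₁, h₂.trans h₃⟩, h₁.trans h₂, h₃⟩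

theorem isCompact_triangle (a b : ℝ) : IsCompact (triangle a b) :=
  (isCompact_Icc.prod isCompact_Icc).of_isClosed_subset
    ((isClosed_le continuous_const continuous_fst).inter
      ((isClosed_le continuous_fst continuous_snd).inter
        (isClosed_le continuous_snd continuous_const)))
    (triangle_subset_Icc_prod a b)

section Fubini

variable {E : Type*} [NormedAddCommGroup E] {a b : ℝ} {F : ℝ × ℝ → E}

theorem integrableOn_indicator_triangle_Icc_prod
    (hF : IntegrableOn F (triangle a b)) :
    IntegrableOn ((triangle a b).indicator F) (Icc a b ×ˢ Icc a b) (volume.prod volume) :=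
  ((integrable_indicator_iff (measurableSet_triangle a b)).2 hF).integrableOn

variable [NormedSpace ℝ E]

theorem setIntegral_triangle_eq_setIntegral_Icc_prod :
    ∫ p in triangle a b, F p = ∫ p in Icc a b ×ˢ Icc a b, (triangle a b).indicator F p := by
  rw [setIntegral_indicator (measurableSet_triangle a b),
    inter_eq_right.2 (triangle_subset_Icc_prod a b)]

theorem setIntegral_triangle_eq_integral_integral (hab : a ≤ b)
    (hF : IntegrableOn F (triangle a b)) :
    ∫ p in triangle a b, F p = ∫ x in a..b, ∫ y in x..b, F (x, y) := by
  rw [setIntegral_triangle_eq_setIntegral_Icc_prod, Measure.volume_eq_prod,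
    setIntegral_prod _ (integrableOn_indicator_triangle_Icc_prod hF),
    intervalIntegral.integral_of_le hab, ← integral_Icc_eq_integral_Ioc]
  refine setIntegral_congr_fun measurableSet_Icc fun x hx => ?_
  have hslice : (fun y => (triangle a b).indicator F (x, y)) =
      (Icc x b).indicator fun y => F (x, y) := by
    ext y
    simp only [indicator, triangle, mem_ofPred_eq, mem_Icc, hx.1, true_and]
  rw [hslice, setIntegral_indicator measurableSet_Icc,
    inter_eq_right.2 (Icc_subset_Icc_left hx.1), intervalIntegral.integral_of_le hx.2,
    integral_Icc_eq_integral_Ioc]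

theorem setIntegral_triangle_eq_integral_integral_swap (hab : a ≤ b)
    (hF : IntegrableOn F (triangle a b)) :
    ∫ p in triangle a b, F p = ∫ y in a..b, ∫ x in a..y, F (x, y) := by
  rw [setIntegral_triangle_eq_setIntegral_Icc_prod, Measure.volume_eq_prod,
    ← setIntegral_prod_swap,
    setIntegral_prod _ (by exact (integrableOn_indicator_triangle_Icc_prod hF).swap),
    intervalIntegral.integral_of_le hab, ← integral_Icc_eq_integral_Ioc]
  refine setIntegral_congr_fun measurableSet_Icc fun y hy => ?_
  have hslice : (fun x => (triangle a b).indicator F (Prod.swap (y, x))) =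
      (Icc a y).indicator fun x => F (x, y) := by
    ext x
    simp only [indicator, triangle, Prod.swap, mem_ofPred_eq, mem_Icc, hy.2, and_true]
  rw [hslice, setIntegral_indicator measurableSet_Icc,
    inter_eq_right.2 (Icc_subset_Icc_right hy.2), intervalIntegral.integral_of_le hy.1,
    integral_Icc_eq_integral_Ioc]

end Fubini

def triangleShear : ℝ × ℝ ≃ᵐ ℝ × ℝ :=
  MeasurableEquiv.ofInvolutive (fun p => (p.2 - p.1, p.2)) (fun p => by simp) (by fun_prop)

@[simp]
theorem triangleShear_apply (p : ℝ × ℝ) : triangleShear p = (p.2 - p.1, p.2) := rfl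

theorem measurePreserving_triangleShear : MeasurePreserving triangleShear := by
  rw [Measure.volume_eq_prod]
  convert ((Measure.measurePreserving_neg volume).prod (MeasurePreserving.id volume)).comp
    (measurePreserving_sub_prod (volume : Measure ℝ) volume) using 1
  ext p <;> simp

theorem triangleShear_preimage_triangle (b : ℝ) :
    triangleShear ⁻¹' triangle 0 b = triangle 0 b := by
  ext p
  simp only [triangle, mem_preimage, triangleShear_apply, mem_ofPred_eq]
  constructor <;> rintro ⟨h₁, h₂, h₃⟩ <;> exact ⟨by linarith, by linarith, h₃⟩

section Shear

variable {E : Type*} [NormedAddCommGroup E] {b : ℝ} {F : ℝ × ℝ → E}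

theorem integrableOn_triangle_comp_shear_iff :
    IntegrableOn (fun p => F (p.2 - p.1, p.2)) (triangle 0 b) ↔
      IntegrableOn F (triangle 0 b) := by
  conv_lhs => rw [← triangleShear_preimage_triangle]
  exact measurePreserving_triangleShear.integrableOn_comp_preimage
    triangleShear.measurableEmbedding

theorem setIntegral_triangle_comp_shear [NormedSpace ℝ E] :
    ∫ p in triangle 0 b, F (p.2 - p.1, p.2) = ∫ p in triangle 0 b, F p := by
  conv_lhs => rw [← triangleShear_preimage_triangle]
  exact measurePreserving_triangleShear.setIntegral_preimage_emb
    triangleShear.measurableEmbedding F _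

end Shear

section Integrability

variable {a b : ℝ} {k : ℝ → ℝ} {G : ℝ × ℝ → ℝ}

theorem ContinuousOn.comp_fst_triangle {u : ℝ → ℝ} (hu : ContinuousOn u (Icc a b)) :
    ContinuousOn (fun p : ℝ × ℝ => u p.1) (triangle a b) :=
  hu.comp continuous_fst.continuousOn fun _ hp => (triangle_subset_Icc_prod a b hp).1

theorem ContinuousOn.comp_snd_triangle {u : ℝ → ℝ} (hu : ContinuousOn u (Icc a b)) :
    ContinuousOn (fun p : ℝ × ℝ => u p.2) (triangle a b) :=
  hu.comp continuous_snd.continuousOn fun _ hp => (triangle_subset_Icc_prod a b hp).2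

theorem integrableOn_triangle_comp_fst_mul (hk : IntegrableOn k (Icc a b))
    (hG : ContinuousOn G (triangle a b)) :
    IntegrableOn (fun p => k p.1 * G p) (triangle a b) := by
  have hk' : IntegrableOn (fun p : ℝ × ℝ => k p.1) (Icc a b ×ˢ Icc a b) := by
    rw [IntegrableOn, Measure.volume_eq_prod, ← Measure.prod_restrict]
    exact hk.comp_fst _
  obtain ⟨C, hC⟩ := (isCompact_triangle a b).exists_bound_of_continuousOn hG
  exact (hk'.mono_set (triangle_subset_Icc_prod a b)).mul_bdd
    (hG.aestronglyMeasurable (measurableSet_triangle a b))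
    ((ae_restrict_iff' (measurableSet_triangle a b)).2 (.of_forall hC))

theorem integrableOn_triangle_comp_sub_mul (hk : IntegrableOn k (Icc 0 b))
    (hG : ContinuousOn G (triangle 0 b)) :
    IntegrableOn (fun p => k (p.2 - p.1) * G p) (triangle 0 b) := by
  rw [← integrableOn_triangle_comp_shear_iff]
  have hGs : ContinuousOn (fun p : ℝ × ℝ => G (p.2 - p.1, p.2)) (triangle 0 b) :=
    hG.comp (by fun_prop) fun p hp => by rwa [← triangleShear_preimage_triangle] at hp
  simpa using integrableOn_triangle_comp_fst_mul hk hGs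

theorem integrableOn_triangle_comp_sub_mul_mul {u v : ℝ → ℝ} (hk : IntegrableOn k (Icc 0 b))
    (hu : ContinuousOn u (Icc 0 b)) (hv : ContinuousOn v (Icc 0 b)) :
    IntegrableOn (fun p => k (p.2 - p.1) * (u p.1 * v p.2)) (triangle 0 b) :=
  integrableOn_triangle_comp_sub_mul (G := fun p => u p.1 * v p.2) hk
    (hu.comp_fst_triangle.mul hv.comp_snd_triangle)

end Integrability

section Volterra

variable {T : ℝ} {k u v : ℝ → ℝ}

theorem integral_volterra_mul_eq_setIntegral_triangle (hT : 0 ≤ T)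
    (hk : IntegrableOn k (Icc 0 T)) (hu : ContinuousOn u (Icc 0 T))
    (hv : ContinuousOn v (Icc 0 T)) :
    ∫ t in 0..T, (∫ r in 0..t, k (t - r) * u r) * v t =
      ∫ p in triangle 0 T, k (p.2 - p.1) * (u p.1 * v p.2) := by
  rw [setIntegral_triangle_eq_integral_integral_swap hT
    (integrableOn_triangle_comp_sub_mul_mul hk hu hv)]
  simp only [← intervalIntegral.integral_mul_const, mul_assoc]

theorem integral_mul_volterra_eq_setIntegral_triangle (hT : 0 ≤ T)
    (hk : IntegrableOn k (Icc 0 T)) (hu : ContinuousOn u (Icc 0 T))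
    (hv : ContinuousOn v (Icc 0 T)) :
    ∫ t in 0..T, u t * ∫ ξ in t..T, k (ξ - t) * v ξ =
      ∫ p in triangle 0 T, k (p.2 - p.1) * (u p.1 * v p.2) := by
  rw [setIntegral_triangle_eq_integral_integral hT
    (integrableOn_triangle_comp_sub_mul_mul hk hu hv)]
  simp only [← intervalIntegral.integral_const_mul, mul_left_comm (u _)]

end Volterra

theorem integral_deriv_comp_sub_mul_eq_sub {T x : ℝ} (hx : x ∈ Icc 0 T)
    {f f' g g' : ℝ → ℝ}
    (hf : ∀ t ∈ Icc 0 T, HasDerivAt f (f' t) t) (hf' : ContinuousOn f' (Icc 0 T))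
    (hg : ∀ t ∈ Icc 0 T, HasDerivAt g (g' t) t) (hg' : ContinuousOn g' (Icc 0 T)) :
    ∫ y in x..T, (f' (y - x) * g y + f (y - x) * g' y) = f (T - x) * g T - f 0 * g x := by
  have hIcc : uIcc x T ⊆ Icc 0 T := by
    rw [uIcc_of_le hx.2]; exact Icc_subset_Icc_left hx.1
  have hshift : MapsTo (fun y => y - x) (uIcc x T) (Icc 0 T) := by
    intro y hy
    rw [uIcc_of_le hx.2] at hy
    exact ⟨by linarith [hy.1], by linarith [hy.2, hx.1]⟩
  rw [intervalIntegral.integral_deriv_mul_eq_sub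
    (fun y hy => (hf _ (hshift hy)).comp_sub_const y x) (fun y hy => hg y (hIcc hy))
    (hf'.comp (continuousOn_id.sub continuousOn_const) hshift).intervalIntegrable
    (hg'.mono hIcc).intervalIntegrable, sub_self]

theorem integral_volterra_mul_add_integral_mul_volterra {T : ℝ} (hT : 0 ≤ T) {k : ℝ → ℝ}
    (hk : IntegrableOn k (Icc 0 T)) {u₁ v₁ u₂ v₂ : ℝ → ℝ}
    (hu₁ : ContinuousOn u₁ (Icc 0 T)) (hv₁ : ContinuousOn v₁ (Icc 0 T))
    (hu₂ : ContinuousOn u₂ (Icc 0 T)) (hv₂ : ContinuousOn v₂ (Icc 0 T)) :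
    (∫ t in 0..T, (∫ r in 0..t, k (t - r) * u₁ r) * v₁ t) +
        ∫ t in 0..T, u₂ t * ∫ ξ in t..T, k (ξ - t) * v₂ ξ =
      ∫ x in 0..T, k x * ∫ y in x..T, (u₁ (y - x) * v₁ y + u₂ (y - x) * v₂ y) := by
  have hsum := integrableOn_triangle_comp_sub_mul
    (G := fun p => u₁ p.1 * v₁ p.2 + u₂ p.1 * v₂ p.2) hk
    ((hu₁.comp_fst_triangle.mul hv₁.comp_snd_triangle).add
      (hu₂.comp_fst_triangle.mul hv₂.comp_snd_triangle))
  rw [integral_volterra_mul_eq_setIntegral_triangle hT hk hu₁ hv₁,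
    integral_mul_volterra_eq_setIntegral_triangle hT hk hu₂ hv₂,
    ← integral_add (integrableOn_triangle_comp_sub_mul_mul hk hu₁ hv₁)
      (integrableOn_triangle_comp_sub_mul_mul hk hu₂ hv₂)]
  simp only [← mul_add]
  rw [← setIntegral_triangle_comp_shear,
    setIntegral_triangle_eq_integral_integral hT (integrableOn_triangle_comp_shear_iff.2 hsum)]
  simp only [sub_sub_cancel, intervalIntegral.integral_const_mul]

theorem volterra_integration_by_parts {T : ℝ} (hT : 0 ≤ T) {k f f' g g' : ℝ → ℝ}
    (hk : IntegrableOn k (Icc 0 T))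
    (hf : ∀ t ∈ Icc 0 T, HasDerivAt f (f' t) t) (hf' : ContinuousOn f' (Icc 0 T))
    (hg : ∀ t ∈ Icc 0 T, HasDerivAt g (g' t) t) (hg' : ContinuousOn g' (Icc 0 T)) :
    (∫ t in 0..T, (∫ r in 0..t, k (t - r) * f' r) * g t) +
        ∫ t in 0..T, f t * ∫ ξ in t..T, k (ξ - t) * g' ξ =
      g T * (∫ ξ in 0..T, k (T - ξ) * f ξ) - f 0 * ∫ ξ in 0..T, k ξ * g ξ := by
  have hf_cont : ContinuousOn f (Icc 0 T) := HasDerivAt.continuousOn hf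
  have hg_cont : ContinuousOn g (Icc 0 T) := HasDerivAt.continuousOn hg
  have hk' : IntervalIntegrable k volume 0 T :=
    (intervalIntegrable_iff_integrableOn_Icc_of_le hT).2 hk
  have hf_refl : ContinuousOn (fun x => f (T - x)) (uIcc 0 T) :=
    hf_cont.comp (continuousOn_const.sub continuousOn_id) fun x hx => by
      rw [uIcc_of_le hT] at hx; exact ⟨by linarith [hx.2], by linarith [hx.1]⟩
  have hf_refl_integral : ∫ ξ in 0..T, k (T - ξ) * f ξ = ∫ x in 0..T, k x * f (T - x) := by
    simpa using
      intervalIntegral.integral_comp_sub_left (fun x => k x * f (T - x)) (a := 0) (b := T) T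
  rw [integral_volterra_mul_add_integral_mul_volterra hT hk hf' hg_cont hf_cont hg',
    intervalIntegral.integral_congr fun x hx => by
      rw [integral_deriv_comp_sub_mul_eq_sub (by rwa [uIcc_of_le hT] at hx) hf hf' hg hg'],
    hf_refl_integral, ← intervalIntegral.integral_const_mul,
    ← intervalIntegral.integral_const_mul, ← intervalIntegral.integral_sub
      ((hk'.mul_continuousOn hf_refl).const_mul _)
      ((hk'.mul_continuousOn (by rwa [uIcc_of_le hT])).const_mul _)]
  congr 1 with x
  ring

/-- **Fractional integration by parts for Caputo derivatives.**
For `γ ∈ (0,1)` and `f, g` continuously differentiable on `[0,T]`: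
`∫_0^T (∂_t^γ f) g dt + f(0) (I^{1-γ}_{T-} g)(0) = ∫_0^T f (∂_{T-t}^γ g) dt + g(T) (I^{1-γ}_{0+} f)(T)`,
written out with the left/right Caputo derivatives and Riemann–Liouville integrals. -/
theorem caputo_fractional_integration_by_parts
    (T γ : ℝ) (hT : 0 < T) (hγ : γ ∈ Ioo (0:ℝ) 1)
    (f f' g g' : ℝ → ℝ)
    (hf : ∀ t ∈ Icc (0:ℝ) T, HasDerivAt f (f' t) t)
    (hf' : ContinuousOn f' (Icc 0 T))
    (hg : ∀ t ∈ Icc (0:ℝ) T, HasDerivAt g (g' t) t)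
    (hg' : ContinuousOn g' (Icc 0 T)) :
    (∫ t in (0:ℝ)..T, ((1 / Real.Gamma (1 - γ)) * ∫ r in (0:ℝ)..t, (t - r) ^ (-γ) * f' r) * g t)
        + f 0 * ((1 / Real.Gamma (1 - γ)) * ∫ ξ in (0:ℝ)..T, ξ ^ (-γ) * g ξ) =
      (∫ t in (0:ℝ)..T, f t * (-(1 / Real.Gamma (1 - γ)) * ∫ ξ in t..T, (ξ - t) ^ (-γ) * g' ξ))
        + g T * ((1 / Real.Gamma (1 - γ)) * ∫ ξ in (0:ℝ)..T, (T - ξ) ^ (-γ) * f ξ) := by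
  have hk : IntegrableOn (fun u : ℝ => u ^ (-γ)) (Icc 0 T) :=
    (intervalIntegrable_iff_integrableOn_Icc_of_le hT.le).1
      (intervalIntegral.intervalIntegrable_rpow' (by linarith [hγ.2]))
  have key := volterra_integration_by_parts hT.le hk hf hf' hg hg'
  simp only [mul_assoc (1 / Gamma (1 - γ)), mul_left_comm (f _),
    intervalIntegral.integral_const_mul] at key ⊢
  linear_combination (1 / Gamma (1 - γ)) * key
end

section
/- Let H be a real Hilbert space, T > 0, and γ ∈ (0,1). If v, w : [0,T] → H are continuously differentiable, then ∫_0^T ⟨(1/Γ(1−γ)) ∫_0^t (t−r)^{−γ} v'(r) dr, w(t)⟩ dt − ∫_0^T ⟨−(1/Γ(1−γ)) ∫_t^T (ξ−t)^{−γ} w'(ξ) dξ, v(t)⟩ dt = ⟨w(T), (1/Γ(1−γ)) ∫_0^T (T−ξ)^{−γ} v(ξ) dξ⟩ − ⟨v(0), (1/Γ(1−γ)) ∫_0^T ξ^{−γ} w(ξ) dξ⟩, where all integrals of H-valued functions are Bochner integrals and ⟨·,·⟩ is the inner product of H. -/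
open MeasureTheory Real Set
open scoped InnerProductSpace

/-!
Substituting the lag `u = t - r` turns both Caputo terms into integrals of `u ^ (-γ)` times a
continuous function over the triangle `{x ≥ 0, u ≥ 0, x + u ≤ T}`. Fubini lets us integrate first
along the diagonals `s ↦ (s, s + u)`, where the two integrands add up to the derivative of
`s ↦ ⟪v s, w (s + u)⟫`; by the fundamental theorem of calculus the diagonal integral is
`⟪v (T - u), w T⟫ - ⟪v 0, w u⟫`, and integrating this against `u ^ (-γ)` gives the two boundary
terms. The argument only uses an integrable kernel and a continuous bilinear pairing.
-/

def cornerTriangle (T : ℝ) : Set (ℝ × ℝ) := {p | 0 ≤ p.1 ∧ 0 ≤ p.2 ∧ p.1 + p.2 ≤ T}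

section CornerTriangle

variable {G : Type*} [NormedAddCommGroup G] [NormedSpace ℝ G] {T : ℝ}

lemma swap_mem_cornerTriangle {p : ℝ × ℝ} : p.swap ∈ cornerTriangle T ↔ p ∈ cornerTriangle T := by
  simp only [cornerTriangle, mem_ofPred_eq, Prod.fst_swap, Prod.snd_swap, add_comm p.2]
  tauto

lemma cornerTriangle_subset_Icc_prod_Icc : cornerTriangle T ⊆ Icc 0 T ×ˢ Icc 0 T :=
  fun _ ⟨h₁, h₂, h₁₂⟩ => ⟨⟨h₁, by linarith⟩, h₂, by linarith⟩

lemma isCompact_cornerTriangle : IsCompact (cornerTriangle T) :=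
  (isCompact_Icc.prod isCompact_Icc).of_isClosed_subset
    ((isClosed_le continuous_const continuous_fst).inter
      ((isClosed_le continuous_const continuous_snd).inter
        (isClosed_le (continuous_fst.add continuous_snd) continuous_const)))
    cornerTriangle_subset_Icc_prod_Icc

lemma measurableSet_cornerTriangle : MeasurableSet (cornerTriangle T) :=
  isCompact_cornerTriangle.isClosed.measurableSet

lemma integral_indicator_cornerTriangle_mk (F : ℝ × ℝ → G) (x : ℝ) :
    ∫ y, (cornerTriangle T).indicator F (x, y) =
      (Icc 0 T).indicator (fun x => ∫ y in 0..T - x, F (x, y)) x := by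
  by_cases hx : x ∈ Icc 0 T
  · have hsection : (fun y => (cornerTriangle T).indicator F (x, y)) =
        (Icc 0 (T - x)).indicator fun y => F (x, y) := by
      ext y
      simp only [indicator_apply, cornerTriangle, mem_ofPred_eq, mem_Icc, hx.1, true_and,
        le_sub_iff_add_le']
    rw [indicator_of_mem hx, hsection, integral_indicator measurableSet_Icc,
      integral_Icc_eq_integral_Ioc, intervalIntegral.integral_of_le (by linarith [hx.2])]
  · have hsection : ∀ y, (x, y) ∉ cornerTriangle T := fun y hxy =>
      hx (cornerTriangle_subset_Icc_prod_Icc hxy).1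
    simp [indicator_of_notMem hx, indicator_of_notMem (hsection _)]

lemma setIntegral_cornerTriangle_eq_integral_integral (hT : 0 ≤ T) {F : ℝ × ℝ → G}
    (hF : IntegrableOn F (cornerTriangle T)) :
    ∫ p in cornerTriangle T, F p = ∫ x in 0..T, ∫ y in 0..T - x, F (x, y) := by
  rw [← integral_indicator measurableSet_cornerTriangle, Measure.volume_eq_prod,
    integral_prod _ ((integrable_indicator_iff measurableSet_cornerTriangle).2 hF)]
  simp_rw [integral_indicator_cornerTriangle_mk]
  rw [integral_indicator measurableSet_Icc, integral_Icc_eq_integral_Ioc,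
    intervalIntegral.integral_of_le hT]

lemma setIntegral_cornerTriangle_eq_integral_integral_swap (hT : 0 ≤ T) {F : ℝ × ℝ → G}
    (hF : IntegrableOn F (cornerTriangle T)) :
    ∫ p in cornerTriangle T, F p = ∫ y in 0..T, ∫ x in 0..T - y, F (x, y) := by
  have hswap : ∀ x y, (cornerTriangle T).indicator F (x, y) =
      (cornerTriangle T).indicator (F ∘ Prod.swap) (y, x) := fun x y => by
    by_cases h : (x, y) ∈ cornerTriangle T
    · rw [indicator_of_mem h, indicator_of_mem ((swap_mem_cornerTriangle (p := (y, x))).1 h)]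
      rfl
    · rw [indicator_of_notMem h,
        indicator_of_notMem (mt (swap_mem_cornerTriangle (p := (y, x))).2 h)]
  rw [← integral_indicator measurableSet_cornerTriangle, Measure.volume_eq_prod,
    integral_prod_symm _ ((integrable_indicator_iff measurableSet_cornerTriangle).2 hF)]
  simp_rw [hswap, integral_indicator_cornerTriangle_mk]
  rw [integral_indicator measurableSet_Icc, integral_Icc_eq_integral_Ioc,
    intervalIntegral.integral_of_le hT]
  rfl

lemma integrableOn_cornerTriangle_smul (hT : 0 ≤ T) {k : ℝ → ℝ}
    (hk : IntervalIntegrable k volume 0 T) {φ : ℝ × ℝ → G}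
    (hφ : ContinuousOn φ (cornerTriangle T)) :
    IntegrableOn (fun p => k p.2 • φ p) (cornerTriangle T) := by
  obtain ⟨C, hC⟩ := isCompact_cornerTriangle.exists_bound_of_continuousOn hφ
  have hk₂ : IntegrableOn (fun p : ℝ × ℝ => k p.2) (Icc 0 T ×ˢ Icc 0 T) := by
    rw [IntegrableOn, Measure.volume_eq_prod, ← Measure.prod_restrict]
    exact ((intervalIntegrable_iff_integrableOn_Icc_of_le hT).1 hk).comp_snd _
  refine Integrable.mono'
    (IntegrableOn.mono_set (hk₂.norm.mul_const C) cornerTriangle_subset_Icc_prod_Icc)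
    ((hk₂.aestronglyMeasurable.mono_set cornerTriangle_subset_Icc_prod_Icc).smul
      (hφ.aestronglyMeasurable measurableSet_cornerTriangle)) ?_
  filter_upwards [ae_restrict_mem measurableSet_cornerTriangle] with p hp
  rw [norm_smul]
  exact mul_le_mul_of_nonneg_left (hC p hp) (norm_nonneg _)


lemma integral_volterra_left_eq_setIntegral_cornerTriangle (hT : 0 ≤ T) (k : ℝ → ℝ)
    {ψ : ℝ → ℝ → G}
    (hψ : IntegrableOn (fun p => k p.2 • ψ (T - p.1 - p.2) (T - p.1)) (cornerTriangle T)) :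
    ∫ t in 0..T, ∫ r in 0..t, k (t - r) • ψ r t =
      ∫ p in cornerTriangle T, k p.2 • ψ (T - p.1 - p.2) (T - p.1) := by
  have hlag : ∀ t, ∫ r in 0..t, k (t - r) • ψ r t = ∫ u in 0..t, k u • ψ (t - u) t := fun t => by
    simpa using intervalIntegral.integral_comp_sub_left (fun u => k u • ψ (t - u) t) t
      (a := 0) (b := t)
  rw [setIntegral_cornerTriangle_eq_integral_integral hT hψ]
  simp_rw [hlag]
  simpa using (intervalIntegral.integral_comp_sub_left
    (fun t => ∫ u in 0..t, k u • ψ (t - u) t) T (a := 0) (b := T)).symm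

lemma integral_volterra_right_eq_setIntegral_cornerTriangle (hT : 0 ≤ T) (k : ℝ → ℝ)
    {ψ : ℝ → ℝ → G} (hψ : IntegrableOn (fun p => k p.2 • ψ p.1 (p.1 + p.2)) (cornerTriangle T)) :
    ∫ t in 0..T, ∫ ξ in t..T, k (ξ - t) • ψ t ξ =
      ∫ p in cornerTriangle T, k p.2 • ψ p.1 (p.1 + p.2) := by
  rw [setIntegral_cornerTriangle_eq_integral_integral hT hψ]
  refine intervalIntegral.integral_congr fun t _ => ?_
  simpa using (intervalIntegral.integral_comp_add_left (fun ξ => k (ξ - t) • ψ t ξ) t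
    (a := 0) (b := T - t)).symm

end CornerTriangle

section Bilinear

variable {E F G : Type*} [NormedAddCommGroup E] [NormedSpace ℝ E] [NormedAddCommGroup F]
  [NormedSpace ℝ F] [NormedAddCommGroup G] [NormedSpace ℝ G] [CompleteSpace G]
  (B : E →L[ℝ] F →L[ℝ] G)

theorem integral_bilinear_deriv_add_eq_sub {a b : ℝ} {f f' : ℝ → E} {g g' : ℝ → F}
    (hf : ∀ x ∈ uIcc a b, HasDerivAt f (f' x) x) (hg : ∀ x ∈ uIcc a b, HasDerivAt g (g' x) x)
    (hf' : ContinuousOn f' (uIcc a b)) (hg' : ContinuousOn g' (uIcc a b)) :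
    (∫ x in a..b, B (f' x) (g x)) + ∫ x in a..b, B (f x) (g' x) =
      B (f b) (g b) - B (f a) (g a) := by
  have hint₁ : IntervalIntegrable (fun x => B (f' x) (g x)) volume a b :=
    (B.continuous₂.comp_continuousOn (hf'.prodMk (HasDerivAt.continuousOn hg))).intervalIntegrable
  have hint₂ : IntervalIntegrable (fun x => B (f x) (g' x)) volume a b :=
    (B.continuous₂.comp_continuousOn ((HasDerivAt.continuousOn hf).prodMk hg')).intervalIntegrable
  rw [← intervalIntegral.integral_add hint₁ hint₂]
  refine intervalIntegral.integral_eq_sub_of_hasDerivAt (f := fun x => B (f x) (g x))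
    (fun x hx => ?_) (hint₁.add hint₂)
  rw [add_comm]
  exact B.hasDerivAt_of_bilinear (fun _ => hf x hx) (fun _ => hg x hx)

theorem integral_bilinear_section_add_eq_sub {T y : ℝ} (hy : y ∈ Icc 0 T) {v v' : ℝ → E}
    {w w' : ℝ → F} (hv : ∀ t ∈ Icc 0 T, HasDerivAt v (v' t) t) (hv' : ContinuousOn v' (Icc 0 T))
    (hw : ∀ t ∈ Icc 0 T, HasDerivAt w (w' t) t) (hw' : ContinuousOn w' (Icc 0 T)) :
    ∫ x in 0..T - y, (B (v' (T - x - y)) (w (T - x)) + B (v x) (w' (x + y))) =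
      B (v (T - y)) (w T) - B (v 0) (w y) := by
  have hmem : ∀ x ∈ uIcc 0 (T - y),
      x ∈ Icc 0 T ∧ x + y ∈ Icc 0 T ∧ T - x - y ∈ Icc 0 T ∧ T - x ∈ Icc 0 T := by
    intro x hx
    rw [uIcc_of_le (by linarith [hy.2])] at hx
    refine ⟨⟨?_, ?_⟩, ⟨?_, ?_⟩, ⟨?_, ?_⟩, ⟨?_, ?_⟩⟩ <;> linarith [hx.1, hx.2, hy.1, hy.2]
  have hvc : ContinuousOn v (Icc 0 T) := HasDerivAt.continuousOn hv
  have hwc : ContinuousOn w (Icc 0 T) := HasDerivAt.continuousOn hw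
  have hint₁ : IntervalIntegrable (fun x => B (v' (T - x - y)) (w (T - x))) volume 0 (T - y) :=
    (B.continuous₂.comp_continuousOn
      ((hv'.comp (by fun_prop) fun x hx => (hmem x hx).2.2.1).prodMk
        (hwc.comp (by fun_prop) fun x hx => (hmem x hx).2.2.2))).intervalIntegrable
  have hint₂ : IntervalIntegrable (fun x => B (v x) (w' (x + y))) volume 0 (T - y) :=
    (B.continuous₂.comp_continuousOn
      ((hvc.comp (by fun_prop) fun x hx => (hmem x hx).1).prodMk
        (hw'.comp (by fun_prop) fun x hx => (hmem x hx).2.1))).intervalIntegrable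
  have hreflect : ∫ x in 0..T - y, B (v' (T - x - y)) (w (T - x)) =
      ∫ s in 0..T - y, B (v' s) (w (s + y)) := by
    have h := intervalIntegral.integral_comp_sub_left (fun s => B (v' s) (w (s + y))) (T - y)
      (a := 0) (b := T - y)
    simpa only [sub_self, sub_zero, sub_right_comm T y, sub_add_cancel] using h
  rw [intervalIntegral.integral_add hint₁ hint₂, hreflect,
    integral_bilinear_deriv_add_eq_sub B (fun x hx => hv x (hmem x hx).1)
      (fun x hx => (hw (x + y) (hmem x hx).2.1).comp_add_const x y)
      (hv'.mono fun x hx => (hmem x hx).1) (hw'.comp (by fun_prop) fun x hx => (hmem x hx).2.1)]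
  simp

theorem integral_integral_kernel_bilinear_add_eq {T : ℝ} (hT : 0 ≤ T) {k : ℝ → ℝ}
    (hk : IntervalIntegrable k volume 0 T) {v v' : ℝ → E} {w w' : ℝ → F}
    (hv : ∀ t ∈ Icc 0 T, HasDerivAt v (v' t) t) (hv' : ContinuousOn v' (Icc 0 T))
    (hw : ∀ t ∈ Icc 0 T, HasDerivAt w (w' t) t) (hw' : ContinuousOn w' (Icc 0 T)) :
    (∫ t in 0..T, ∫ r in 0..t, k (t - r) • B (v' r) (w t)) +
        ∫ t in 0..T, ∫ ξ in t..T, k (ξ - t) • B (v t) (w' ξ) =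
      (∫ r in 0..T, k (T - r) • B (v r) (w T)) - ∫ ξ in 0..T, k ξ • B (v 0) (w ξ) := by
  have hvc : ContinuousOn v (Icc 0 T) := HasDerivAt.continuousOn hv
  have hwc : ContinuousOn w (Icc 0 T) := HasDerivAt.continuousOn hw
  -- the two terms on the left in the triangle coordinates `(T - t, t - r)` and `(t, ξ - t)`
  have hint₁ : IntegrableOn (fun p => k p.2 • B (v' (T - p.1 - p.2)) (w (T - p.1)))
      (cornerTriangle T) := by
    refine integrableOn_cornerTriangle_smul hT hk (B.continuous₂.comp_continuousOn
      ((hv'.comp (by fun_prop) ?_).prodMk (hwc.comp (by fun_prop) ?_))) <;>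
    exact fun p ⟨h₁, h₂, h₁₂⟩ => ⟨by linarith, by linarith⟩
  have hint₂ : IntegrableOn (fun p => k p.2 • B (v p.1) (w' (p.1 + p.2))) (cornerTriangle T) := by
    refine integrableOn_cornerTriangle_smul hT hk (B.continuous₂.comp_continuousOn
      ((hvc.comp (by fun_prop) ?_).prodMk (hw'.comp (by fun_prop) ?_))) <;>
    exact fun p ⟨h₁, h₂, h₁₂⟩ => ⟨by linarith, by linarith⟩
  have hint₃ : IntervalIntegrable (fun y => k y • B (v (T - y)) (w T)) volume 0 T := by
    refine hk.smul_continuousOn (B.continuous₂.comp_continuousOn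
      ((hvc.comp (by fun_prop) ?_).prodMk continuousOn_const))
    rw [uIcc_of_le hT]
    exact fun y hy => ⟨by linarith [hy.2], by linarith [hy.1]⟩
  have hint₄ : IntervalIntegrable (fun y => k y • B (v 0) (w y)) volume 0 T :=
    hk.smul_continuousOn (B.continuous₂.comp_continuousOn
      (continuousOn_const.prodMk (hwc.mono (uIcc_of_le hT).subset)))
  have hreflect : (∫ r in 0..T, k (T - r) • B (v r) (w T)) =
      ∫ y in 0..T, k y • B (v (T - y)) (w T) := by
    simpa using intervalIntegral.integral_comp_sub_left (fun y => k y • B (v (T - y)) (w T)) T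
      (a := 0) (b := T)
  rw [integral_volterra_left_eq_setIntegral_cornerTriangle hT k hint₁,
    integral_volterra_right_eq_setIntegral_cornerTriangle hT k hint₂, ← integral_add hint₁ hint₂,
    setIntegral_cornerTriangle_eq_integral_integral_swap hT (F := fun p => _ + _)
      (hint₁.add hint₂), hreflect,
    ← intervalIntegral.integral_sub hint₃ hint₄]
  refine intervalIntegral.integral_congr fun y hy => ?_
  rw [uIcc_of_le hT] at hy
  simp only [← smul_add, intervalIntegral.integral_smul,
    integral_bilinear_section_add_eq_sub B hy hv hv' hw hw', smul_sub]

lemma map_intervalIntegral_smul_left {a b : ℝ} {f : ℝ → ℝ} {g : ℝ → E} [CompleteSpace E]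
    (hf : IntervalIntegrable f volume a b) (hg : ContinuousOn g (uIcc a b)) (y : F) :
    B (∫ x in a..b, f x • g x) y = ∫ x in a..b, f x • B (g x) y := by
  rw [← B.flip_apply, ← (B.flip y).intervalIntegral_comp_comm (hf.smul_continuousOn hg)]
  simp

lemma map_intervalIntegral_smul_right {a b : ℝ} {f : ℝ → ℝ} {g : ℝ → F} [CompleteSpace F]
    (hf : IntervalIntegrable f volume a b) (hg : ContinuousOn g (uIcc a b)) (x : E) :
    B x (∫ y in a..b, f y • g y) = ∫ y in a..b, f y • B x (g y) := by
  rw [← (B x).intervalIntegral_comp_comm (hf.smul_continuousOn hg)]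
  simp

theorem integral_bilinear_volterra_add_eq [CompleteSpace E] [CompleteSpace F] {T : ℝ} (hT : 0 ≤ T)
    {k : ℝ → ℝ} (hk : IntervalIntegrable k volume 0 T) {v v' : ℝ → E} {w w' : ℝ → F}
    (hv : ∀ t ∈ Icc 0 T, HasDerivAt v (v' t) t) (hv' : ContinuousOn v' (Icc 0 T))
    (hw : ∀ t ∈ Icc 0 T, HasDerivAt w (w' t) t) (hw' : ContinuousOn w' (Icc 0 T)) :
    (∫ t in 0..T, B (∫ r in 0..t, k (t - r) • v' r) (w t)) +
        ∫ t in 0..T, B (v t) (∫ ξ in t..T, k (ξ - t) • w' ξ) =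
      B (∫ r in 0..T, k (T - r) • v r) (w T) - B (v 0) (∫ ξ in 0..T, k ξ • w ξ) := by
  have hvc : ContinuousOn v (Icc 0 T) := HasDerivAt.continuousOn hv
  have hwc : ContinuousOn w (Icc 0 T) := HasDerivAt.continuousOn hw
  have h₁ : ∀ t ∈ uIcc 0 T, B (∫ r in 0..t, k (t - r) • v' r) (w t) =
      ∫ r in 0..t, k (t - r) • B (v' r) (w t) := fun t ht => by
    rw [uIcc_of_le hT] at ht
    have hsub : uIcc 0 t ⊆ Icc 0 T := by
      rw [uIcc_of_le ht.1]; exact Icc_subset_Icc le_rfl ht.2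
    refine map_intervalIntegral_smul_left B ?_ (hv'.mono hsub) (w t)
    simpa using ((hk.mono_set (hsub.trans (uIcc_of_le hT).symm.subset)).comp_sub_left t).symm
  have h₂ : ∀ t ∈ uIcc 0 T, B (v t) (∫ ξ in t..T, k (ξ - t) • w' ξ) =
      ∫ ξ in t..T, k (ξ - t) • B (v t) (w' ξ) := fun t ht => by
    rw [uIcc_of_le hT] at ht
    have hsub : uIcc t T ⊆ Icc 0 T := by
      rw [uIcc_of_le ht.2]; exact Icc_subset_Icc ht.1 le_rfl
    refine map_intervalIntegral_smul_right B ?_ (hw'.mono hsub) (v t)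
    have hsub' : uIcc 0 (T - t) ⊆ uIcc 0 T := by
      rw [uIcc_of_le hT, uIcc_of_le (by linarith [ht.2])]
      exact Icc_subset_Icc le_rfl (by linarith [ht.1])
    simpa using (hk.mono_set hsub').comp_sub_right t
  rw [intervalIntegral.integral_congr h₁, intervalIntegral.integral_congr h₂,
    integral_integral_kernel_bilinear_add_eq B hT hk hv hv' hw hw',
    map_intervalIntegral_smul_left B (by simpa using (hk.comp_sub_left T).symm)
      (by rwa [uIcc_of_le hT]) (w T),
    map_intervalIntegral_smul_right B hk (by rwa [uIcc_of_le hT]) (v 0)]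

end Bilinear

/-- **Vector-valued fractional integration by parts formula.**
For a real Hilbert space `H`, `γ ∈ (0,1)` and `v, w : [0,T] → H` continuously
differentiable:
`∫_0^T ⟨∂_t^γ v, w⟩ - ⟨∂_{T-t}^γ w, v⟩ dt = ⟨w(T), (I^{1-γ}_{0+} v)(T)⟩ - ⟨v(0), (I^{1-γ}_{T-} w)(0)⟩`,
with Caputo derivatives and Riemann–Liouville integrals realized as Bochner integrals. -/
theorem caputo_fractional_integration_by_parts_hilbert
    {H : Type*} [NormedAddCommGroup H] [InnerProductSpace ℝ H] [CompleteSpace H]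
    (T γ : ℝ) (hT : 0 < T) (hγ : γ ∈ Ioo (0:ℝ) 1)
    (v v' w w' : ℝ → H)
    (hv : ∀ t ∈ Icc (0:ℝ) T, HasDerivAt v (v' t) t)
    (hv' : ContinuousOn v' (Icc 0 T))
    (hw : ∀ t ∈ Icc (0:ℝ) T, HasDerivAt w (w' t) t)
    (hw' : ContinuousOn w' (Icc 0 T)) :
    (∫ t in (0:ℝ)..T,
        ⟪(1 / Real.Gamma (1 - γ)) • ∫ r in (0:ℝ)..t, (t - r) ^ (-γ) • v' r, w t⟫_ℝ)
      - (∫ t in (0:ℝ)..T,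
          ⟪-((1 / Real.Gamma (1 - γ)) • ∫ ξ in t..T, (ξ - t) ^ (-γ) • w' ξ), v t⟫_ℝ) =
    ⟪w T, (1 / Real.Gamma (1 - γ)) • ∫ ξ in (0:ℝ)..T, (T - ξ) ^ (-γ) • v ξ⟫_ℝ
      - ⟪v 0, (1 / Real.Gamma (1 - γ)) • ∫ ξ in (0:ℝ)..T, ξ ^ (-γ) • w ξ⟫_ℝ := by
  have hk : IntervalIntegrable (fun u : ℝ => u ^ (-γ)) volume 0 T :=
    intervalIntegral.intervalIntegrable_rpow' (by linarith [hγ.2])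
  have key := integral_bilinear_volterra_add_eq (innerSL ℝ) hT.le hk hv hv' hw hw'
  have hinnerSL : ∀ x y : H, innerSL ℝ x y = ⟪x, y⟫_ℝ := fun _ _ => rfl
  simp only [real_inner_smul_left, real_inner_smul_right, inner_neg_left,
    intervalIntegral.integral_const_mul, intervalIntegral.integral_neg]
  -- `real_inner_comm` puts every inner product of `key` and of the goal in the same order
  simp only [hinnerSL, real_inner_comm] at key ⊢
  linear_combination (1 / Real.Gamma (1 - γ)) * key
end
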